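/- Let n ≥ 1 and let T be a simple graph on 2n vertices that is a tree (connected and acyclic) with a vertex v of degree n, and suppose the chromatic symmetric function of T is Schur positive. Then T has the following 'broom' structure determined by a partition ν of n−1: every vertex of T other than v and its neighbors has degree 1 and is adjacent to a neighbor of v; equivalently, every vertex of T is at distance at most 2 from v and every vertex at distance exactly 2 from v has degree 1. (Hence T is isomorphic to the tree T(ν) in which a center v has n neighbors v₁, …, v_n and v_i has exactly ν_i additional leaf neighbors, where ν is the partition of n−1 recording the numbers of such leaves.) -/

import Mathlib

/-- A proper coloring of a simple graph: adjacent vertices get different colors. -/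
def IsProperColoring {V : Type*} (G : SimpleGraph V) (κ : V → ℕ) : Prop :=
  ∀ ⦃a b : V⦄, G.Adj a b → κ a ≠ κ b

/-- The number of proper colorings of `G` whose color-class sizes are given by `d`. -/
noncomputable def colorCount {V : Type*} [Fintype V] (G : SimpleGraph V) (d : ℕ →₀ ℕ) : ℕ :=
  Nat.card {κ : V → ℕ // IsProperColoring G κ ∧
    ∀ i : ℕ, (Finset.univ.filter fun v => κ v = i).card = d i}

/-- The number of semistandard Young tableaux of shape `μ` with content `d`. -/
noncomputable def ssytCount (μ : YoungDiagram) (d : ℕ →₀ ℕ) : ℕ :=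
  Nat.card {T : SemistandardYoungTableau μ //
    ∀ i : ℕ, (μ.cells.filter fun c => T c.1 c.2 = i).card = d i}

/-- The chromatic symmetric function of `G` is Schur positive. -/
def SchurPositive {V : Type*} [Fintype V] (G : SimpleGraph V) : Prop :=
  ∃ c : YoungDiagram →₀ ℕ,
    (∀ μ ∈ c.support, μ.card = Fintype.card V) ∧
    ∀ d : ℕ →₀ ℕ, colorCount G d = ∑ μ ∈ c.support, c μ * ssytCount μ d

/-!
Trees are bipartite, so `X_T` has a positive coefficient at some content `(a, b)` with `b ≤ a`.
In the Schur expansion, some shape `μ` of `X_T` then carries a semistandard tableau of content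
`(a, b)`; such a `μ` has at most two rows, the second of length at most `b ≤ n`, so it also
carries a tableau of content `(n, n)`. Hence `T` has a proper coloring with two color classes of
size `n`. The `n` neighbours of `v` fill the whole class opposite to `v`, so every other vertex
has the color of `v` and all its neighbours are neighbours of `v`; in a tree there can be only
one such common neighbour.
-/

open SimpleGraph Finset

section Content

variable {α : Type*} {s : Finset α} {f : α → ℕ}

noncomputable def binaryContent (a b : ℕ) : ℕ →₀ ℕ := Finsupp.single 0 a + Finsupp.single 1 b

lemma binaryContent_apply (a b i : ℕ) :
    binaryContent a b i = if i = 0 then a else if i = 1 then b else 0 := by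
  simp only [binaryContent, Finsupp.add_apply, Finsupp.single_apply]
  split_ifs <;> omega

lemma mem_support_of_card_filter_eq {d : ℕ →₀ ℕ} (h : ∀ i, #{x ∈ s | f x = i} = d i) {x : α}
    (hx : x ∈ s) : f x ∈ d.support := by
  rw [Finsupp.mem_support_iff, ← h, ← pos_iff_ne_zero, card_pos]
  exact ⟨x, mem_filter.mpr ⟨hx, rfl⟩⟩

lemma le_one_of_card_filter_eq_binaryContent {a b : ℕ}
    (h : ∀ i, #{x ∈ s | f x = i} = binaryContent a b i) {x : α} (hx : x ∈ s) : f x ≤ 1 := by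
  have := Finsupp.mem_support_iff.mp (mem_support_of_card_filter_eq h hx)
  rw [binaryContent_apply] at this
  split_ifs at this <;> omega

lemma card_filter_eq_zero_add_card_filter_eq_one (hf : ∀ x ∈ s, f x ≤ 1) :
    #{x ∈ s | f x = 0} + #{x ∈ s | f x = 1} = #s := by
  rw [← card_filter_add_card_filter_not (s := s) (fun x => f x = 0)]
  congr 2
  refine filter_congr fun x hx => ?_
  have := hf x hx
  omega

lemma card_filter_eq_binaryContent (hf : ∀ x ∈ s, f x ≤ 1) (i : ℕ) :
    #{x ∈ s | f x = i} = binaryContent #{x ∈ s | f x = 0} #{x ∈ s | f x = 1} i := by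
  rw [binaryContent_apply]
  split_ifs with h0 h1
  · rw [h0]
  · rw [h1]
  · exact card_eq_zero.mpr <| filter_false_of_mem fun x hx => by have := hf x hx; omega

end Content

section Counts

variable {V : Type*} [Fintype V] {G : SimpleGraph V} {μ : YoungDiagram} {d : ℕ →₀ ℕ}

instance finite_colorings (G : SimpleGraph V) (d : ℕ →₀ ℕ) :
    Finite {κ : V → ℕ // IsProperColoring G κ ∧ ∀ i, #{x | κ x = i} = d i} := by
  refine Finite.of_injective
    (fun κ x => (⟨κ.1 x, mem_support_of_card_filter_eq κ.2.2 (mem_univ x)⟩ : d.support)) ?_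
  intro κ κ' h
  ext x
  exact congrArg Subtype.val (congrFun h x)

instance finite_ssyt (μ : YoungDiagram) (d : ℕ →₀ ℕ) :
    Finite {T : SemistandardYoungTableau μ // ∀ i, #{c ∈ μ.cells | T c.1 c.2 = i} = d i} := by
  refine Finite.of_injective (fun T (c : μ.cells) =>
    (⟨T.1 c.1.1 c.1.2, mem_support_of_card_filter_eq T.2 c.2⟩ : d.support)) ?_
  intro T T' h
  ext i j
  by_cases hc : (i, j) ∈ μ
  · exact congrArg Subtype.val (congrFun h ⟨(i, j), hc⟩)
  · rw [T.1.zeros hc, T'.1.zeros hc]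

lemma colorCount_pos_iff :
    0 < colorCount G d ↔ ∃ κ, IsProperColoring G κ ∧ ∀ i, #{x | κ x = i} = d i := by
  rw [colorCount, Nat.card_pos_iff, nonempty_subtype]
  exact and_iff_left inferInstance

lemma ssytCount_pos_iff :
    0 < ssytCount μ d ↔ ∃ T : SemistandardYoungTableau μ,
      ∀ i, #{c ∈ μ.cells | T c.1 c.2 = i} = d i := by
  rw [ssytCount, Nat.card_pos_iff, nonempty_subtype]
  exact and_iff_left inferInstance

lemma SchurPositive.colorCount_pos (hG : SchurPositive G) {d' : ℕ →₀ ℕ}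
    (hd : 0 < colorCount G d)
    (h : ∀ μ : YoungDiagram, μ.card = Fintype.card V → 0 < ssytCount μ d → 0 < ssytCount μ d') :
    0 < colorCount G d' := by
  obtain ⟨c, hcard, hc⟩ := hG
  rw [hc] at hd ⊢
  obtain ⟨μ, hμ, hpos⟩ := sum_pos_iff.mp hd
  rw [CanonicallyOrderedAdd.mul_pos] at hpos
  exact sum_pos_iff.mpr ⟨μ, hμ, CanonicallyOrderedAdd.mul_pos.mpr
    ⟨hpos.1, h μ (hcard μ hμ) hpos.2⟩⟩

end Counts

section Tableaux

variable {μ : YoungDiagram} {a b : ℕ}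

lemma fst_le_one_of_binaryContent {T : SemistandardYoungTableau μ}
    (hT : ∀ i, #{c ∈ μ.cells | T c.1 c.2 = i} = binaryContent a b i) {i j : ℕ}
    (hij : (i, j) ∈ μ) : i ≤ 1 := by
  by_contra! hi
  have h01 : T 0 j < T 1 j := T.col_strict one_pos (μ.up_left_mem hi.le le_rfl hij)
  have h1i : T 1 j < T i j := T.col_strict hi hij
  have : T i j ≤ 1 := le_one_of_card_filter_eq_binaryContent hT ((μ.mem_cells (i, j)).mpr hij)
  omega

lemma rowLen_one_le_of_binaryContent {T : SemistandardYoungTableau μ}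
    (hT : ∀ i, #{c ∈ μ.cells | T c.1 c.2 = i} = binaryContent a b i) : μ.rowLen 1 ≤ b := by
  have hb : #{c ∈ μ.cells | T c.1 c.2 = 1} = b := by
    rw [hT, binaryContent_apply]; rfl
  rw [← hb, μ.rowLen_eq_card]
  refine card_le_card fun c hc => ?_
  obtain ⟨hcμ, hc1⟩ := YoungDiagram.mem_row_iff.mp hc
  obtain ⟨i, j⟩ := c
  obtain rfl : i = 1 := hc1
  have h01 : T 0 j < T 1 j := T.col_strict one_pos hcμ
  have : T 1 j ≤ 1 := le_one_of_card_filter_eq_binaryContent hT ((μ.mem_cells (1, j)).mpr hcμ)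
  exact Finset.mem_filter.mpr ⟨(μ.mem_cells _).mpr hcμ, show T 1 j = 1 by omega⟩

lemma card_le_rowLen_zero_add_rowLen_one (hrows : ∀ {i j : ℕ}, (i, j) ∈ μ → i ≤ 1) :
    μ.card ≤ μ.rowLen 0 + μ.rowLen 1 := by
  rw [μ.rowLen_eq_card, μ.rowLen_eq_card]
  refine (card_le_card fun c hc => ?_).trans (card_union_le _ _)
  have hcμ := (μ.mem_cells c).mp hc
  rw [mem_union, YoungDiagram.mem_row_iff, YoungDiagram.mem_row_iff]
  rcases Nat.le_one_iff_eq_zero_or_eq_one.mp (hrows hcμ) with h | h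
  exacts [.inl ⟨hcμ, h⟩, .inr ⟨hcμ, h⟩]

def twoRowTableau (μ : YoungDiagram) (a : ℕ) (hrows : ∀ {i j : ℕ}, (i, j) ∈ μ → i ≤ 1)
    (hlen : μ.rowLen 1 ≤ a) : SemistandardYoungTableau μ where
  entry i j := if (i, j) ∈ μ ∧ (i ≠ 0 ∨ a ≤ j) then 1 else 0
  row_weak' {i j1 j2} hj hc2 := by
    have hc1 : (i, j1) ∈ μ := μ.up_left_mem le_rfl hj.le hc2
    split_ifs <;> grind
  col_strict' {i1 i2 j} hi hc2 := by
    obtain rfl : i2 = 1 := by have := hrows hc2; omega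
    have := YoungDiagram.mem_iff_lt_rowLen.mp hc2
    split_ifs <;> grind
  zeros' hc := if_neg fun h => hc h.1

lemma twoRowTableau_apply (μ : YoungDiagram) (a : ℕ) (hrows : ∀ {i j : ℕ}, (i, j) ∈ μ → i ≤ 1)
    (hlen : μ.rowLen 1 ≤ a) (i j : ℕ) :
    twoRowTableau μ a hrows hlen i j = if (i, j) ∈ μ ∧ (i ≠ 0 ∨ a ≤ j) then 1 else 0 :=
  rfl

lemma twoRowTableau_content (hrows : ∀ {i j : ℕ}, (i, j) ∈ μ → i ≤ 1) (hlen : μ.rowLen 1 ≤ b)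
    (hba : b ≤ a) (hcard : μ.card = a + b) (i : ℕ) :
    #{c ∈ μ.cells | twoRowTableau μ a hrows (hlen.trans hba) c.1 c.2 = i} =
      binaryContent a b i := by
  set T := twoRowTableau μ a hrows (hlen.trans hba) with hT_def
  have hT : ∀ c ∈ μ.cells, T c.1 c.2 ≤ 1 := fun c _ => by
    rw [hT_def, twoRowTableau_apply]
    split_ifs <;> omega
  have hzeros : #{c ∈ μ.cells | T c.1 c.2 = 0} = a := by
    have := card_le_rowLen_zero_add_rowLen_one hrows
    have hfilter : ({c ∈ μ.cells | T c.1 c.2 = 0} : Finset (ℕ × ℕ)) = {0} ×ˢ range a := by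
      ext ⟨i, j⟩
      simp only [hT_def, twoRowTableau_apply, Finset.mem_filter, YoungDiagram.mem_cells,
        mem_product, mem_singleton, mem_range]
      have := @YoungDiagram.mem_iff_lt_rowLen μ i j
      have := @YoungDiagram.mem_iff_lt_rowLen μ 0 j
      split_ifs <;> grind
    rw [hfilter, card_product, card_singleton, card_range, one_mul]
  have hones : #{c ∈ μ.cells | T c.1 c.2 = 1} = b := by
    have := card_filter_eq_zero_add_card_filter_eq_one hT
    rw [YoungDiagram.card] at hcard
    omega
  rw [card_filter_eq_binaryContent hT, hzeros, hones]

lemma ssytCount_binaryContent_pos_of_le {a' b' : ℕ} (h : 0 < ssytCount μ (binaryContent a b))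
    (hb : b ≤ b') (hba : b' ≤ a') (hcard : μ.card = a' + b') :
    0 < ssytCount μ (binaryContent a' b') := by
  obtain ⟨T, hT⟩ := ssytCount_pos_iff.mp h
  have hrows : ∀ {i j : ℕ}, (i, j) ∈ μ → i ≤ 1 := fst_le_one_of_binaryContent hT
  have hlen : μ.rowLen 1 ≤ b' := (rowLen_one_le_of_binaryContent hT).trans hb
  exact ssytCount_pos_iff.mpr ⟨_, twoRowTableau_content hrows hlen hba hcard⟩

end Tableaux

namespace SimpleGraph

variable {V : Type*} {G : SimpleGraph V}

theorem IsAcyclic.subsingleton_commonNeighbors (hG : G.IsAcyclic) {x v : V} (hxv : x ≠ v) :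
    (G.commonNeighbors x v).Subsingleton := by
  have isPath (w : V) (hw : G.Adj x w ∧ G.Adj v w) :
      (Walk.cons hw.1 (.cons hw.2.symm .nil) : G.Walk x v).IsPath := by
    simp [hxv, hw.1.ne, hw.2.ne']
  intro w hw w' hw'
  rw [mem_commonNeighbors] at hw hw'
  simpa using congrArg (fun p : G.Path x v => p.1.snd)
    ((hG.subsingleton_path x v).elim ⟨_, isPath w hw⟩ ⟨_, isPath w' hw'⟩)

theorem IsTree.degree_eq_one_of_neighborSet_subset (hG : G.IsTree) {x v : V}
    [Fintype (G.neighborSet x)] (hxv : x ≠ v) (h : G.neighborSet x ⊆ G.neighborSet v) :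
    G.degree x = 1 := by
  rw [degree_eq_one_iff_existsUnique_adj]
  obtain ⟨w, hw⟩ := (hG.connected x v).nonempty_neighborSet_left hxv
  exact ⟨w, hw, fun w' hw' =>
    hG.isAcyclic.subsingleton_commonNeighbors hxv ⟨hw', h hw'⟩ ⟨hw, h hw⟩⟩

end SimpleGraph

section Colorings

variable {V : Type*} [Fintype V] {G : SimpleGraph V} {κ : V → ℕ}

lemma IsProperColoring.adj_of_ne [DecidableRel G.Adj] (hκ : IsProperColoring G κ) {v x : V}
    (hcard : #{y | κ y ≠ κ v} ≤ G.degree v) (hx : κ x ≠ κ v) : G.Adj v x := by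
  have hsub : G.neighborFinset v ⊆ ({y | κ y ≠ κ v} : Finset V) := fun y hy =>
    Finset.mem_filter.mpr ⟨mem_univ y, (hκ ((mem_neighborFinset G v y).mp hy)).symm⟩
  have := eq_of_subset_of_card_le hsub (by rwa [card_neighborFinset_eq_degree])
  rw [← mem_neighborFinset, this]
  simpa using hx

lemma colorCount_binaryContent_pos (hκ : IsProperColoring G κ) (hle : ∀ x, κ x ≤ 1) :
    0 < colorCount G (binaryContent #{x | κ x = 0} #{x | κ x = 1}) :=
  colorCount_pos_iff.mpr ⟨κ, hκ, card_filter_eq_binaryContent fun x _ => hle x⟩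

lemma SimpleGraph.IsAcyclic.exists_colorCount_binaryContent_pos (hG : G.IsAcyclic) :
    ∃ a b, b ≤ a ∧ a + b = Fintype.card V ∧ 0 < colorCount G (binaryContent a b) := by
  let κ : V → ℕ := fun x => hG.coloringTwo x
  have hκ : IsProperColoring G κ := fun _ _ h => Fin.val_injective.ne (hG.coloringTwo.valid h)
  have hle : ∀ x, κ x ≤ 1 := fun x => Nat.le_of_lt_succ (hG.coloringTwo x).isLt
  have hsum := card_filter_eq_zero_add_card_filter_eq_one (s := univ) fun x _ => hle x
  rw [card_univ] at hsum
  rcases le_total #{x | κ x = 1} #{x | κ x = 0} with h | h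
  · exact ⟨_, _, h, hsum, colorCount_binaryContent_pos hκ hle⟩
  · have hflip : IsProperColoring G (1 - κ ·) := by
      intro x y hxy
      have := hκ hxy
      have := hle x
      have := hle y
      dsimp only
      omega
    have h0 : #{x | 1 - κ x = 0} = #{x | κ x = 1} :=
      congrArg card (filter_congr fun x _ => by have := hle x; omega)
    have h1 : #{x | 1 - κ x = 1} = #{x | κ x = 0} :=
      congrArg card (filter_congr fun x _ => by have := hle x; omega)
    refine ⟨_, _, h, by omega, ?_⟩
    simpa only [h0, h1] using colorCount_binaryContent_pos hflip fun x => by omega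

end Colorings

theorem broom_of_schurPositive_general
    {V : Type*} [Fintype V]
    {n : ℕ}
    (T : SimpleGraph V) [DecidableRel T.Adj]
    (hcard : Fintype.card V = 2 * n) (htree : T.IsTree)
    (v : V) (hdeg : T.degree v = n)
    (hpos : SchurPositive T) :
    ∀ x : V, x ≠ v → ¬ T.Adj v x →
      T.degree x = 1 ∧ ∃ w : V, T.Adj v w ∧ T.Adj w x := by
  obtain ⟨a, b, hba, hab, h₀⟩ := htree.isAcyclic.exists_colorCount_binaryContent_pos
  have h₁ : 0 < colorCount T (binaryContent n n) := hpos.colorCount_pos h₀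
    fun μ hμ h => ssytCount_binaryContent_pos_of_le h (by omega) le_rfl (by omega)
  obtain ⟨κ, hκ, hcontent⟩ := colorCount_pos_iff.mp h₁
  have hother : #{y | κ y ≠ κ v} ≤ T.degree v := by
    have hv : #{y | κ y = κ v} = n := by
      have := le_one_of_card_filter_eq_binaryContent hcontent (mem_univ v)
      rw [hcontent, binaryContent_apply]
      split_ifs <;> omega
    have := card_filter_add_card_filter_not (s := univ) (fun y => κ y = κ v)
    rw [card_univ, hcard, hv] at this
    simp only [ne_eq]
    omega
  intro x hxv hvx
  have hx : κ x = κ v := not_not.mp (mt (hκ.adj_of_ne hother) hvx)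
  have hsub : T.neighborSet x ⊆ T.neighborSet v := fun w hw =>
    hκ.adj_of_ne hother fun h => hκ hw (hx.trans h.symm)
  have hdeg_x := htree.degree_eq_one_of_neighborSet_subset hxv hsub
  obtain ⟨w, hw, -⟩ := degree_eq_one_iff_existsUnique_adj.mp hdeg_x
  exact ⟨hdeg_x, w, hsub hw, hw.symm⟩

/-- If the chromatic symmetric function of a tree `T` on `2n` vertices with a vertex `v`
of degree `n` is Schur positive, then `T` is a "broom": every vertex other than `v` and
its neighbors is a leaf adjacent to a neighbor of `v`.  (Hence `T ≅ T(ν)` for some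
partition `ν` of `n - 1`.) -/
theorem broom_of_schurPositive
    {V : Type*} [Fintype V] [DecidableEq V]
    {n : ℕ} (hn : 1 ≤ n)
    (T : SimpleGraph V) [DecidableRel T.Adj]
    (hcard : Fintype.card V = 2 * n) (htree : T.IsTree)
    (v : V) (hdeg : T.degree v = n)
    (hpos : SchurPositive T) :
    ∀ x : V, x ≠ v → ¬ T.Adj v x →
      T.degree x = 1 ∧ ∃ w : V, T.Adj v w ∧ T.Adj w x :=
  broom_of_schurPositive_general T hcard htree v hdeg hpos
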